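/- If G is the CDF of a probability measure μ on [0,1]^d with G(z) = 0 whenever some coordinate of z is 0, then the Bernstein polynomial B_{k,G} equals the CDF of the absolutely continuous measure with density b_{k,G}(z) = Σ_{ν∈∏_j{1,...,kj}} W_ν ∏_j β(z_j; ν_j, k_j−ν_j+1), where W_ν = μ(∏_j ((ν_j−1)/k_j, ν_j/k_j]); in particular B_{k,G} is absolutely continuous with respect to Lebesgue measure. -/

import Mathlib

/-!
Because `G` vanishes wherever a coordinate is `0`, the faces of the orthant below a grid
point `ν / k` carry no mass, so `G (ν / k)` is the mass of the half-open box `(0, ν / k]`, that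
is, the sum of the cell masses `W_η` over the cells `η < ν`. Exchanging the two sums turns `B_{k,G} (z)` into
`∑_η W_η ∏_j ∑_{i > η_j} b_{k_j,i} (z_j)`, a sum of binomial tails. The derivatives of the
Bernstein basis polynomials telescope, so the tail `∑_{i > m} b_{k,i}` is the primitive of the
Beta `(m + 1, k - m)` density vanishing at `0`; Fubini then turns the product of these
one-dimensional integrals into an integral over the box `[0, z]`.
-/

open MeasureTheory

/-- The Beta(ν, k−ν+1) density with integer parameters. -/
noncomputable def betaDens (k ν : ℕ) (z : ℝ) : ℝ :=
  (k : ℝ) * ((k - 1).choose (ν - 1) : ℝ) * z ^ (ν - 1) * (1 - z) ^ (k - ν)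

open Set Polynomial

theorem betaDens_succ_eq_eval_bernsteinPolynomial (k m : ℕ) (t : ℝ) :
    betaDens k (m + 1) t = k * (bernsteinPolynomial ℝ (k - 1) m).eval t := by
  simp [betaDens, bernsteinPolynomial, Nat.sub_sub, add_comm 1, mul_assoc]

theorem continuous_betaDens (k m : ℕ) : Continuous (betaDens k m) := by
  unfold betaDens
  fun_prop

theorem derivative_sum_Ico_bernsteinPolynomial (R : Type*) [CommRing R] {m n : ℕ} (hmn : m ≤ n) :
    derivative (∑ i ∈ Finset.Ico m n, bernsteinPolynomial R n (i + 1)) =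
      n * bernsteinPolynomial R (n - 1) m := by
  have telescope : ∑ i ∈ Finset.Ico m n,
      (bernsteinPolynomial R (n - 1) i - bernsteinPolynomial R (n - 1) (i + 1)) =
        bernsteinPolynomial R (n - 1) m - bernsteinPolynomial R (n - 1) n := by
    rw [← neg_sub, ← Finset.sum_Ico_sub _ hmn, ← Finset.sum_neg_distrib]
    simp
  rw [derivative_sum]
  simp only [bernsteinPolynomial.derivative_succ]
  rw [← Finset.mul_sum, telescope]
  rcases n with _ | n
  · simp
  · simp [bernsteinPolynomial.eq_zero_of_lt R (Nat.lt_succ_self n)]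

theorem integral_betaDens_succ {k m : ℕ} (hmk : m ≤ k) {z : ℝ} (hz : 0 ≤ z) :
    ∫ t in Icc 0 z, betaDens k (m + 1) t =
      ∑ i ∈ Finset.Ico m k, (bernsteinPolynomial ℝ k (i + 1)).eval z := by
  set p := ∑ i ∈ Finset.Ico m k, bernsteinPolynomial ℝ k (i + 1)
  have hp : betaDens k (m + 1) = fun t => (derivative p).eval t := by
    ext t
    rw [derivative_sum_Ico_bernsteinPolynomial ℝ hmk, betaDens_succ_eq_eval_bernsteinPolynomial]
    simp
  have hp0 : p.eval 0 = 0 := by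
    simp [p, eval_finsetSum, bernsteinPolynomial.eval_at_0]
  rw [integral_Icc_eq_integral_Ioc, ← intervalIntegral.integral_of_le hz, hp,
    intervalIntegral.integral_eq_sub_of_hasDerivAt (fun t _ => p.hasDerivAt t)
      (p.derivative.continuous.intervalIntegrable _ _), hp0, sub_zero, eval_finsetSum]

theorem sum_Ico_eval_bernsteinPolynomial (k m : ℕ) (z : ℝ) :
    ∑ i ∈ Finset.Ico m k, (bernsteinPolynomial ℝ k (i + 1)).eval z =
      ∑ i : Fin (k + 1),
        if m < i then (k.choose i : ℝ) * z ^ (i : ℕ) * (1 - z) ^ (k - i) else 0 := by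
  rw [Fin.sum_univ_eq_sum_range
      (fun i => if m < i then (k.choose i : ℝ) * z ^ i * (1 - z) ^ (k - i) else 0),
    Finset.sum_range_succ', ← Finset.sum_filter]
  have hfilter : (Finset.range k).filter (m ≤ ·) = Finset.Ico m k := by
    ext i
    simp [and_comm]
  simp [bernsteinPolynomial, hfilter]

theorem sum_sum_ite_mul_prod {ι R : Type*} [Fintype ι] [DecidableEq ι] [CommSemiring R]
    {α β : ι → Type*} [∀ i, Fintype (α i)] [∀ i, Fintype (β i)]
    (r : ∀ i, α i → β i → Prop) [∀ i a b, Decidable (r i a b)]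
    [∀ (a : ∀ i, α i) (b : ∀ i, β i), Decidable (∀ i, r i (a i) (b i))]
    (W : (∀ i, α i) → R) (c : ∀ i, β i → R) :
    ∑ b : (∀ i, β i),
        (∑ a : (∀ i, α i), if ∀ i, r i (a i) (b i) then W a else (0 : R)) * ∏ i, c i (b i) =
      ∑ a, W a * ∏ i, ∑ b : β i, if r i (a i) b then c i b else 0 := by
  simp_rw [Fintype.prod_sum, Fintype.prod_ite_zero, Finset.sum_mul, Finset.mul_sum, ite_mul,
    mul_ite, zero_mul, mul_zero]
  rw [Finset.sum_comm]

theorem setIntegral_univ_pi_prod_eq_prod {ι 𝕜 : Type*} [Fintype ι] [RCLike 𝕜] {E : ι → Type*}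
    [∀ i, MeasurableSpace (E i)] (μ : ∀ i, Measure (E i)) [∀ i, SigmaFinite (μ i)]
    (s : ∀ i, Set (E i)) (f : ∀ i, E i → 𝕜) :
    ∫ x in univ.pi s, ∏ i, f i (x i) ∂Measure.pi μ = ∏ i, ∫ t in s i, f i t ∂μ i := by
  rw [Measure.restrict_pi_pi, integral_fintype_prod_eq_prod]

theorem measure_Iic_eq_measure_pi_Ioc {ι : Type*} [Countable ι] {μ : Measure (ι → ℝ)}
    (hnull : ∀ c : ι → ℝ, (∃ j, c j = 0) → μ (Iic c) = 0) (c : ι → ℝ) :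
    μ (Iic c) = μ (univ.pi fun j => Ioc 0 (c j)) := by
  classical
  refine (measure_eq_measure_of_null_sdiff (fun x hx j => (hx j trivial).2) ?_).symm
  refine measure_mono_null (fun x ⟨hxc, hx⟩ => ?_)
    (measure_iUnion_null fun j => hnull (Function.update c j 0) ⟨j, by simp⟩)
  obtain ⟨j, -, hj⟩ : ∃ j, j ∈ univ ∧ x j ∉ Ioc 0 (c j) := by simpa [Set.mem_pi] using hx
  exact mem_iUnion.2 ⟨j, le_update_iff.2 ⟨by simpa [hxc j] using hj, fun i _ => hxc i⟩⟩

theorem Ioc_zero_eq_biUnion_Ioc (k n : ℕ) (hn : n ≤ k) :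
    Ioc 0 ((n : ℝ) / k) =
      ⋃ m ∈ {m : Fin k | (m : ℕ) < n}, Ioc ((m : ℝ) / k) ((((m : ℕ) + 1 : ℕ) : ℝ) / k) := by
  have hmono : Monotone fun m : ℕ => (m : ℝ) / k := fun a b hab =>
    div_le_div_of_nonneg_right (Nat.cast_le.2 hab) (Nat.cast_nonneg _)
  have := hmono.biUnion_Ico_Ioc_map_succ 0 n
  simp only [Order.succ_eq_add_one, Nat.cast_zero, zero_div] at this
  rw [← this]
  ext x
  simp only [mem_iUnion, mem_ofPred_eq, mem_Ico, exists_prop]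
  constructor
  · rintro ⟨i, ⟨-, hi⟩, hx⟩
    exact ⟨⟨i, by omega⟩, hi, hx⟩
  · rintro ⟨m, hm, hx⟩
    exact ⟨m, ⟨Nat.zero_le _, hm⟩, hx⟩

/-- The paper's cell with upper corner `ν / k` is `gridCell k (ν - 1)`: here cells are indexed
from `0` by their lower corner. -/
def gridCell {ι : Type*} (k : ι → ℕ) (η : ∀ j, Fin (k j)) : Set (ι → ℝ) :=
  {x | ∀ j, (η j : ℝ) / k j < x j ∧ x j ≤ (((η j : ℕ) + 1 : ℕ) : ℝ) / k j}

section gridCell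

variable {ι : Type*}

theorem gridCell_eq_pi (k : ι → ℕ) (η : ∀ j, Fin (k j)) :
    gridCell k η = univ.pi fun j => Ioc ((η j : ℝ) / k j) ((((η j : ℕ) + 1 : ℕ) : ℝ) / k j) := by
  ext x
  simp [gridCell]

theorem measurableSet_gridCell [Countable ι] (k : ι → ℕ) (η : ∀ j, Fin (k j)) :
    MeasurableSet (gridCell k η) := by
  rw [gridCell_eq_pi]
  exact .univ_pi fun _ => measurableSet_Ioc

theorem pairwise_disjoint_gridCell (k : ι → ℕ) :
    Pairwise (Function.onFun Disjoint (gridCell k)) := by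
  intro η η' hne
  obtain ⟨j, hj⟩ := Function.ne_iff.1 hne
  have hmono : Monotone fun m : ℕ => (m : ℝ) / k j := fun a b hab =>
    div_le_div_of_nonneg_right (Nat.cast_le.2 hab) (Nat.cast_nonneg _)
  simp only [Function.onFun, gridCell_eq_pi, disjoint_univ_pi]
  exact ⟨j, hmono.pairwise_disjoint_on_Ioc_succ (Fin.val_injective.ne hj)⟩

variable [Fintype ι] [DecidableEq ι]

theorem pi_Ioc_eq_biUnion_gridCell (k : ι → ℕ) (ν : ∀ j, Fin (k j + 1)) :
    (univ.pi fun j => Ioc 0 ((ν j : ℝ) / k j)) =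
      ⋃ η ∈ Finset.univ.filter (fun η : ∀ j, Fin (k j) => ∀ j, (η j : ℕ) < ν j), gridCell k η := by
  have hfilter :
      (↑(Finset.univ.filter (fun η : ∀ j, Fin (k j) => ∀ j, (η j : ℕ) < ν j)) : Set _) =
        univ.pi fun j => {m : Fin (k j) | (m : ℕ) < ν j} := by
    ext η
    simp
  rw [← Finset.set_biUnion_coe, hfilter]
  simp_rw [gridCell_eq_pi]
  rw [biUnion_univ_pi (fun j => {m : Fin (k j) | (m : ℕ) < ν j})
    fun j (m : Fin (k j)) => Ioc ((m : ℝ) / k j) ((((m : ℕ) + 1 : ℕ) : ℝ) / k j)]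
  exact congrArg univ.pi <| funext fun j =>
    Ioc_zero_eq_biUnion_Ioc _ _ (Nat.lt_succ_iff.1 (ν j).isLt)

theorem measure_Iic_eq_sum_gridCell {μ : Measure (ι → ℝ)}
    (hnull : ∀ c : ι → ℝ, (∃ j, c j = 0) → μ (Iic c) = 0) (k : ι → ℕ) (ν : ∀ j, Fin (k j + 1)) :
    μ (Iic fun j => (ν j : ℝ) / k j) =
      ∑ η : ∀ j, Fin (k j), if ∀ j, (η j : ℕ) < ν j then μ (gridCell k η) else 0 := by
  rw [measure_Iic_eq_measure_pi_Ioc hnull, pi_Ioc_eq_biUnion_gridCell,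
    measure_biUnion_finset ((pairwise_disjoint_gridCell k).set_pairwise _)
      (fun η _ => measurableSet_gridCell k η), Finset.sum_filter]

end gridCell

theorem bernstein_cdf_of_density_general (d : ℕ)
    (μ : Measure (Fin d → ℝ)) [IsProbabilityMeasure μ]
    (G : (Fin d → ℝ) → ℝ)
    (hG : ∀ z, G z = (μ {x | ∀ j, x j ≤ z j}).toReal)
    (hG0 : ∀ z : Fin d → ℝ, (∃ j, z j = 0) → G z = 0)
    (k : Fin d → ℕ) :
    ∀ z ∈ Set.Icc (0 : Fin d → ℝ) 1,
      (∑ ν : (∀ j, Fin (k j + 1)),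
          G (fun j => (ν j : ℝ) / (k j : ℝ)) *
            ∏ j, ((k j).choose (ν j) : ℝ) * z j ^ (ν j : ℕ) *
              (1 - z j) ^ (k j - (ν j : ℕ))) =
      ∫ x in Set.Icc (0 : Fin d → ℝ) z,
        (∑ ν : (∀ j, Fin (k j)),
          (μ {x : Fin d → ℝ | ∀ j,
              (ν j : ℝ) / (k j : ℝ) < x j ∧ x j ≤ ((ν j : ℕ) + 1 : ℕ) / (k j : ℝ)}).toReal *
            ∏ j, betaDens (k j) ((ν j : ℕ) + 1) (x j)) := by
  intro z hz
  have hnull : ∀ c : Fin d → ℝ, (∃ j, c j = 0) → μ (Iic c) = 0 := fun c hc =>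
    ((ENNReal.toReal_eq_zero_iff _).1 ((hG c).symm.trans (hG0 c hc))).resolve_right
      (measure_ne_top μ _)
  have hgrid (ν : ∀ j, Fin (k j + 1)) : G (fun j => (ν j : ℝ) / k j) =
      ∑ η : ∀ j, Fin (k j), if ∀ j, (η j : ℕ) < ν j then (μ (gridCell k η)).toReal else 0 := by
    rw [hG]
    change (μ (Iic _)).toReal = _
    rw [measure_Iic_eq_sum_gridCell hnull,
      ENNReal.toReal_sum fun η _ => by split_ifs <;> simp]
    -- the two sides differ only in their `Decidable` instances
    exact Finset.sum_congr rfl fun η _ => by split_ifs <;> rfl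
  have hintegrable (η : ∀ j, Fin (k j)) : IntegrableOn
      (fun x : Fin d → ℝ => (μ (gridCell k η)).toReal * ∏ j, betaDens (k j) ((η j : ℕ) + 1) (x j))
      (Icc 0 z) :=
    (continuous_const.mul (continuous_finsetProd _ fun j _ =>
      (continuous_betaDens _ _).comp (continuous_apply j))).integrableOn_Icc
  simp_rw [hgrid]
  refine (sum_sum_ite_mul_prod (fun j (a : Fin (k j)) (b : Fin (k j + 1)) => (a : ℕ) < b)
    (fun η => (μ (gridCell k η)).toReal)
    (fun j i => ((k j).choose i : ℝ) * z j ^ (i : ℕ) * (1 - z j) ^ (k j - i))).trans ?_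
  refine Eq.trans ?_ (integral_finsetSum _ fun η _ => hintegrable η).symm
  refine Finset.sum_congr rfl fun η _ => ?_
  rw [integral_const_mul, ← pi_univ_Icc, volume_pi, setIntegral_univ_pi_prod_eq_prod]
  congr 1
  refine Finset.prod_congr rfl fun j _ => ?_
  rw [Pi.zero_apply, integral_betaDens_succ (η j).isLt.le (hz.1 j),
    sum_Ico_eval_bernsteinPolynomial]

/-- if G is the CDF of a probability measure μ on [0,1]^d vanishing
whenever some coordinate is 0, then the Bernstein polynomial B_{k,G} is the CDF of
the absolutely continuous measure with the Bernstein copula density built from the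
grid-cell masses of μ. -/
theorem bernstein_cdf_of_density (d : ℕ) (hd : 0 < d)
    (μ : Measure (Fin d → ℝ)) [IsProbabilityMeasure μ]
    (hsupp : μ (Set.Icc (0 : Fin d → ℝ) 1) = 1)
    (G : (Fin d → ℝ) → ℝ)
    (hG : ∀ z, G z = (μ {x | ∀ j, x j ≤ z j}).toReal)
    (hG0 : ∀ z : Fin d → ℝ, (∃ j, z j = 0) → G z = 0)
    (k : Fin d → ℕ) (hk : ∀ j, 0 < k j) :
    ∀ z ∈ Set.Icc (0 : Fin d → ℝ) 1,
      (∑ ν : (∀ j, Fin (k j + 1)),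
          G (fun j => (ν j : ℝ) / (k j : ℝ)) *
            ∏ j, ((k j).choose (ν j) : ℝ) * z j ^ (ν j : ℕ) *
              (1 - z j) ^ (k j - (ν j : ℕ))) =
      ∫ x in Set.Icc (0 : Fin d → ℝ) z,
        (∑ ν : (∀ j, Fin (k j)),
          (μ {x : Fin d → ℝ | ∀ j,
              (ν j : ℝ) / (k j : ℝ) < x j ∧ x j ≤ ((ν j : ℕ) + 1 : ℕ) / (k j : ℝ)}).toReal *
            ∏ j, betaDens (k j) ((ν j : ℕ) + 1) (x j)) :=
  bernstein_cdf_of_density_general d μ G hG hG0 k
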